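/- Let A₁,…,A_m ∈ R^{N×N} be symmetric positive semidefinite, b₁,…,b_m ∈ R, and f(x) = Σᵢ (⟨Aᵢx, x⟩ − bᵢ)². Every gradient trajectory of f is bounded: if x : [0,∞) → R^N solves x'(t) = −∇f(x(t)) with x(0) = x₀, then sup_{t≥0} ‖x(t)‖ < ∞. -/

import Mathlib

/-!
Along a gradient trajectory `f` decreases, so every `⟪Aᵢ x(t), x(t)⟫` stays below
`bᵢ + √(f (x 0))`. The velocity `-∇f = -4 ∑ (⟪Aᵢ x, x⟫ - bᵢ) • Aᵢ x` lies in `V = ⨆ range Aᵢ`, so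
`x(t) ∈ x(0) + V`. Splitting `x(t) = u(t) + w₀` with `u(t) ∈ V` and `w₀ ∈ Vᗮ = ⋂ ker Aᵢ` fixed, the
form `∑ ⟪Aᵢ u, u⟫` does not see `w₀`; it is positive definite on `V`, since a positive operator
vanishes wherever its quadratic form does, hence coercive on `V` by compactness of the unit sphere,
and this bounds `u(t)`.
-/

open RealInnerProductSpace Set

section Positive

variable {E : Type*} [NormedAddCommGroup E] [InnerProductSpace ℝ E]

theorem LinearMap.IsPositive.apply_eq_zero_of_inner_self_eq_zero {T : E →ₗ[ℝ] E}
    (hT : T.IsPositive) {v : E} (hv : ⟪T v, v⟫ = 0) : T v = 0 := by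
  -- Cauchy–Schwarz for the semi-inner product `⟪T ·, ·⟫`, applied to `v` and `T v`
  have hCS := LinearMap.BilinForm.apply_mul_apply_le_of_forall_zero_le ((innerₗ E).comp T)
    hT.inner_nonneg_left v (T v)
  simp only [LinearMap.comp_apply, innerₗ_apply_apply, hv, zero_mul,
    hT.isSymmetric (T v) v, ← sq] at hCS
  exact inner_self_eq_zero.mp (pow_eq_zero_iff two_ne_zero |>.mp (le_antisymm hCS (sq_nonneg _)))

theorem mem_orthogonal_iSup_range_iff {ι : Type*} {A : ι → E →ₗ[ℝ] E}
    (hA : ∀ i, (A i).IsSymmetric) {v : E} :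
    v ∈ (⨆ i, LinearMap.range (A i))ᗮ ↔ ∀ i, A i v = 0 := by
  simp only [← Submodule.iInf_orthogonal, Submodule.mem_iInf, (hA _).orthogonal_range,
    LinearMap.mem_ker]

theorem inner_apply_add_self_of_apply_eq_zero {T : E →ₗ[ℝ] E} (hT : T.IsSymmetric) {w : E}
    (hw : T w = 0) (u : E) : ⟪T (u + w), u + w⟫ = ⟪T u, u⟫ := by
  rw [map_add, hw, add_zero, inner_add_right, hT u w, hw, inner_zero_right, add_zero]

theorem sum_inner_apply_self_pos {ι : Type*} [Fintype ι] {A : ι → E →ₗ[ℝ] E}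
    (hA : ∀ i, (A i).IsPositive) {v : E} (hv : v ∈ ⨆ i, LinearMap.range (A i)) (hv0 : v ≠ 0) :
    0 < ∑ i, ⟪A i v, v⟫ := by
  refine (Finset.sum_nonneg fun i _ => (hA i).inner_nonneg_left v).lt_of_ne fun hzero => hv0 ?_
  have hker : ∀ i, A i v = 0 := fun i => (hA i).apply_eq_zero_of_inner_self_eq_zero <|
    (Finset.sum_eq_zero_iff_of_nonneg fun j _ => (hA j).inner_nonneg_left v).mp hzero.symm i
      (Finset.mem_univ i)
  have hperp := (mem_orthogonal_iSup_range_iff fun i => (hA i).isSymmetric).mpr hker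
  simpa using (Submodule.orthogonal_disjoint _).le_bot ⟨hv, hperp⟩

end Positive

section Coercive

variable {F : Type*} [NormedAddCommGroup F] [NormedSpace ℝ F] [FiniteDimensional ℝ F]

theorem exists_pos_mul_norm_sq_le_of_isHomogeneous_two {Q : F → ℝ} (hQc : Continuous Q)
    (hQh : ∀ (r : ℝ) v, Q (r • v) = r ^ 2 * Q v) (hQpos : ∀ v, v ≠ 0 → 0 < Q v) :
    ∃ c > 0, ∀ v, c * ‖v‖ ^ 2 ≤ Q v := by
  have hQ0 : Q 0 = 0 := by simpa using hQh 0 0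
  rcases subsingleton_or_nontrivial F with hF | hF
  · exact ⟨1, one_pos, fun v => by simp [Subsingleton.elim v 0, hQ0]⟩
  obtain ⟨u, hu, hmin⟩ := (isCompact_sphere (0 : F) 1).exists_isMinOn
    (NormedSpace.sphere_nonempty.mpr zero_le_one) hQc.continuousOn
  refine ⟨Q u, hQpos u (ne_zero_of_mem_sphere one_ne_zero ⟨u, hu⟩), fun v => ?_⟩
  rcases eq_or_ne v 0 with rfl | hv
  · simp [hQ0]
  have hvn : 0 < ‖v‖ := norm_pos_iff.mpr hv
  have hle : Q u ≤ ‖v‖⁻¹ ^ 2 * Q v := by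
    rw [← hQh]
    exact hmin (by simp [norm_smul, hvn.ne'])
  calc Q u * ‖v‖ ^ 2 ≤ ‖v‖⁻¹ ^ 2 * Q v * ‖v‖ ^ 2 := by gcongr
    _ = Q v := by field_simp

end Coercive

section Bounded

variable {E : Type*} [NormedAddCommGroup E] [InnerProductSpace ℝ E] [FiniteDimensional ℝ E]

theorem exists_norm_le_of_sum_inner_apply_self_le {ι : Type*} [Fintype ι]
    {A : ι → E →ₗ[ℝ] E} (hA : ∀ i, (A i).IsPositive) (x₀ : E) (M : ℝ) :
    ∃ C, ∀ y, y - x₀ ∈ ⨆ i, LinearMap.range (A i) → ∑ i, ⟪A i y, y⟫ ≤ M → ‖y‖ ≤ C := by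
  set V := ⨆ i, LinearMap.range (A i)
  have hcont : Continuous fun v : V => ∑ i, ⟪A i v, v⟫ := continuous_finsetSum _ fun i _ =>
    ((A i).continuous_of_finiteDimensional.comp continuous_subtype_val).inner
      continuous_subtype_val
  obtain ⟨c, hc, hcQ⟩ := exists_pos_mul_norm_sq_le_of_isHomogeneous_two hcont
    (fun r v => by simp only [Submodule.coe_smul, map_smul, real_inner_smul_left,
      real_inner_smul_right, Finset.mul_sum]; exact Finset.sum_congr rfl fun i _ => by ring)
    (fun v hv => sum_inner_apply_self_pos hA v.2 (by simpa using hv))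
  set w₀ := x₀ - V.starProjection x₀
  have hw₀ : ∀ i, A i w₀ = 0 := (mem_orthogonal_iSup_range_iff fun i => (hA i).isSymmetric).mp
    (V.sub_starProjection_mem_orthogonal x₀)
  refine ⟨√(M / c) + ‖w₀‖, fun y hy hyM => ?_⟩
  have hu : y - w₀ ∈ V := by
    simpa [w₀, sub_sub_eq_add_sub, add_sub_right_comm] using
      V.add_mem hy (V.starProjection_apply_mem x₀)
  have hQ : ∑ i, ⟪A i (y - w₀), y - w₀⟫ = ∑ i, ⟪A i y, y⟫ := Finset.sum_congr rfl fun i _ => by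
    simpa using (inner_apply_add_self_of_apply_eq_zero (hA i).isSymmetric (hw₀ i) (y - w₀)).symm
  have hnorm : ‖y - w₀‖ ≤ √(M / c) := Real.le_sqrt_of_sq_le <| (le_div_iff₀' hc).mpr <|
    (hcQ ⟨y - w₀, hu⟩).trans (hQ.trans_le hyM)
  calc ‖y‖ = ‖(y - w₀) + w₀‖ := by rw [sub_add_cancel]
    _ ≤ √(M / c) + ‖w₀‖ := (norm_add_le _ _).trans (by gcongr)

end Bounded

section Calculus

variable {E : Type*} [NormedAddCommGroup E] [InnerProductSpace ℝ E]

theorem hasFDerivAt_inner_apply_self [FiniteDimensional ℝ E] {T : E →ₗ[ℝ] E}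
    (hT : T.IsSymmetric) (y : E) :
    HasFDerivAt (fun x => ⟪T x, x⟫) (innerSL ℝ ((2 : ℝ) • T y)) y := by
  have hT' : HasFDerivAt (fun x => T x) T.toContinuousLinearMap y :=
    T.toContinuousLinearMap.hasFDerivAt
  refine (hT'.inner ℝ (hasFDerivAt_id y)).congr_fderiv ?_
  ext h
  simp [hT h y, real_inner_comm, two_smul]

theorem hasGradientAt_sum_sq_inner_apply_self_sub [FiniteDimensional ℝ E] {ι : Type*}
    [Fintype ι] {A : ι → E →ₗ[ℝ] E} (hA : ∀ i, (A i).IsSymmetric) (b : ι → ℝ) (y : E) :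
    HasGradientAt (fun x => ∑ i, (⟪A i x, x⟫ - b i) ^ 2)
      (∑ i, (4 * (⟪A i y, y⟫ - b i)) • A i y) y := by
  rw [hasGradientAt_iff_hasFDerivAt]
  refine (HasFDerivAt.fun_sum fun i _ =>
    ((hasFDerivAt_inner_apply_self (hA i) y).sub_const (b i)).pow 2).congr_fderiv ?_
  ext h
  simp only [map_smul, map_sum, sum_apply, smul_apply,
    coe_innerSL_apply, smul_eq_mul, InnerProductSpace.toDual_apply_apply, pow_one,
    Nat.add_one_sub_one, nsmul_eq_mul, Nat.cast_ofNat]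
  exact Finset.sum_congr rfl fun i _ => by ring

theorem antitoneOn_comp_of_hasDerivAt_neg_gradient [CompleteSpace E] {f : E → ℝ}
    (hf : Differentiable ℝ f) {x : ℝ → E}
    (hx : ∀ t ∈ Ici (0 : ℝ), HasDerivAt x (-gradient f (x t)) t) :
    AntitoneOn (f ∘ x) (Ici 0) := by
  have hder : ∀ t ∈ Ici (0 : ℝ), HasDerivAt (f ∘ x) (-‖gradient f (x t)‖ ^ 2) t := fun t ht =>
    ((hf (x t)).hasGradientAt.hasFDerivAt.comp_hasDerivAt t (hx t ht)).congr_deriv <| by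
      rw [InnerProductSpace.toDual_apply_apply, inner_neg_right, real_inner_self_eq_norm_sq]
  refine antitoneOn_of_hasDerivWithinAt_nonpos (f' := fun t => -‖gradient f (x t)‖ ^ 2)
    (convex_Ici 0)
    (fun t ht => (hder t ht).continuousAt.continuousWithinAt) (fun t ht => ?_)
    (fun t _ => neg_nonpos.mpr (sq_nonneg _))
  rw [interior_Ici] at ht
  exact (hder t (Ioi_subset_Ici_self ht)).hasDerivWithinAt

theorem sub_mem_of_hasDerivAt_mem (V : Submodule ℝ E) [V.HasOrthogonalProjection]
    {x x' : ℝ → E} (hx : ∀ t ∈ Ici (0 : ℝ), HasDerivAt x (x' t) t)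
    (hV : ∀ t ∈ Ici (0 : ℝ), x' t ∈ V) {t : ℝ} (ht : 0 ≤ t) : x t - x 0 ∈ V := by
  rw [← V.orthogonal_orthogonal, Submodule.mem_orthogonal]
  intro w hw
  have hderiv : ∀ s ∈ Ico 0 t, HasDerivWithinAt (fun s => ⟪w, x s⟫) 0 (Ici s) s := fun s hs =>
    (((innerSL ℝ w).hasFDerivAt.comp_hasDerivAt s (hx s hs.1)).congr_deriv
      (V.inner_left_of_mem_orthogonal (hV s hs.1) hw)).hasDerivWithinAt
  have hconst := constant_of_has_deriv_right_zero
    (fun s hs => (continuousAt_const.inner (hx s hs.1).continuousAt).continuousWithinAt) hderiv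
    t ⟨ht, le_rfl⟩
  simpa [inner_sub_right, sub_eq_zero] using hconst

end Calculus

theorem sum_le_sum_add_sqrt_of_sum_sq_sub_le {ι : Type*} (s : Finset ι) {a b : ι → ℝ} {F : ℝ}
    (h : ∑ i ∈ s, (a i - b i) ^ 2 ≤ F) : ∑ i ∈ s, a i ≤ ∑ i ∈ s, (b i + √F) :=
  Finset.sum_le_sum fun i hi => by
    have hsq : (a i - b i) ^ 2 ≤ F :=
      (Finset.single_le_sum (f := fun j => (a j - b j) ^ 2) (fun j _ => sq_nonneg _) hi).trans h
    linarith [Real.le_sqrt_of_sq_le hsq]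

theorem stmt14_general {N m : ℕ}
    (A : Fin m → EuclideanSpace ℝ (Fin N) →ₗ[ℝ] EuclideanSpace ℝ (Fin N))
    (hsym : ∀ i x y, ⟪A i x, y⟫ = ⟪x, A i y⟫)
    (hpsd : ∀ i x, 0 ≤ ⟪A i x, x⟫)
    (b : Fin m → ℝ)
    (f : EuclideanSpace ℝ (Fin N) → ℝ)
    (hf : ∀ x, f x = ∑ i, (⟪A i x, x⟫ - b i) ^ 2)
    (x : ℝ → EuclideanSpace ℝ (Fin N))
    (hx : ∀ t ∈ Set.Ici (0 : ℝ), HasDerivAt x (-gradient f (x t)) t) :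
    ∃ C : ℝ, ∀ t : ℝ, 0 ≤ t → ‖x t‖ ≤ C := by
  have hA : ∀ i, (A i).IsPositive := fun i => (LinearMap.isPositive_iff _).mpr ⟨hsym i, hpsd i⟩
  have hgrad (y) : HasGradientAt f (∑ i, (4 * (⟪A i y, y⟫ - b i)) • A i y) y :=
    funext hf ▸ hasGradientAt_sum_sq_inner_apply_self_sub hsym b y
  have hdescent (t) (ht : 0 ≤ t) : f (x t) ≤ f (x 0) :=
    antitoneOn_comp_of_hasDerivAt_neg_gradient (fun y => (hgrad y).differentiableAt) hx
      self_mem_Ici ht ht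
  have hgrad_mem (y) : gradient f y ∈ ⨆ i, LinearMap.range (A i) := by
    rw [(hgrad y).gradient]
    exact Submodule.sum_mem _ fun i _ => Submodule.smul_mem _ _ <|
      Submodule.mem_iSup_of_mem i (LinearMap.mem_range_self _ _)
  have hmem (t) (ht : 0 ≤ t) : x t - x 0 ∈ ⨆ i, LinearMap.range (A i) :=
    sub_mem_of_hasDerivAt_mem _ hx (fun s _ => Submodule.neg_mem _ (hgrad_mem (x s))) ht
  obtain ⟨C, hC⟩ := exists_norm_le_of_sum_inner_apply_self_le hA (x 0) (∑ i, (b i + √(f (x 0))))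
  exact ⟨C, fun t ht => hC _ (hmem t ht) <|
    sum_le_sum_add_sqrt_of_sum_sq_sub_le _ (hf (x t) ▸ hdescent t ht)⟩

theorem stmt14 {N m : ℕ}
    (A : Fin m → EuclideanSpace ℝ (Fin N) →ₗ[ℝ] EuclideanSpace ℝ (Fin N))
    (hsym : ∀ i x y, ⟪A i x, y⟫ = ⟪x, A i y⟫)
    (hpsd : ∀ i x, 0 ≤ ⟪A i x, x⟫)
    (b : Fin m → ℝ)
    (f : EuclideanSpace ℝ (Fin N) → ℝ)
    (hf : ∀ x, f x = ∑ i, (⟪A i x, x⟫ - b i) ^ 2)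
    (x₀ : EuclideanSpace ℝ (Fin N))
    (x : ℝ → EuclideanSpace ℝ (Fin N)) (hx0 : x 0 = x₀)
    (hx : ∀ t ∈ Set.Ici (0 : ℝ), HasDerivAt x (-gradient f (x t)) t) :
    ∃ C : ℝ, ∀ t : ℝ, 0 ≤ t → ‖x t‖ ≤ C :=
  stmt14_general A hsym hpsd b f hf x hx
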